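/- Let 0 < α < 1, T > 0, and M₁, M₂ > 0 with M₁/(1+z) ≤ E_{α,1}(−z) ≤ M₂/(1+z) for all z ≥ 0, and let ϑ > 0. Then for every square-summable family g = (g_j)_{j∈J_d} of reals: (i) for every t ∈ [0,T], ∑_{j∈J_d} ( E_{α,1}(−λ_j t^α) / (ϑ + E_{α,1}(−λ_j T^α)) )² g_j² ≤ (M₂/ϑ)² ∑_{j∈J_d} g_j²; and (ii) for every t ∈ [0,T] and s ∈ (0,T], ∑_{j∈J_d} ( E_{α,1}(−λ_j t^α) E_{α,1}(−λ_j s^α) / (ϑ + E_{α,1}(−λ_j T^α)) )² g_j² ≤ ( M₂² T^α/(M₁ s^α) )² ∑_{j∈J_d} g_j². -/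

import Mathlib

/-!
Every Mittag-Leffler value in the sums is `E(z) := E_{α,1}(-z)` with `z ≥ 0`, so `0 < E(z) ≤ M₂/(1+z)`,
and each estimate reduces to a pointwise bound `0 ≤ r_j ≤ C` on the multiplier of `g_j`. In (i)
`r_j ≤ M₂/ϑ` by dropping `E(λ_j T^α)` from the denominator. In (ii) the denominator is instead bounded
below by `M₁/(1 + λ_j T^α)`, which gives `r_j ≤ (M₂²/M₁) (1 + λ_j T^α)/(1 + λ_j s^α) ≤ M₂² T^α/(M₁ s^α)`,
uniformly in `λ_j`.
-/

/-- The Mittag-Leffler function `E_{a,b}(z) = ∑_{i=0}^∞ z^i / Γ(a i + b)`. -/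
noncomputable def mittagLeffler (a b z : ℝ) : ℝ :=
  ∑' i : ℕ, z ^ i / Real.Gamma (a * i + b)

/-- `λ_j = j_1² + ⋯ + j_d²` for a multi-index `j` of positive integers. -/
def lamMulti {d : ℕ} (j : Fin d → ℕ+) : ℝ := ∑ i, ((j i : ℕ) : ℝ) ^ 2

lemma lamMulti_nonneg {d : ℕ} (j : Fin d → ℕ+) : 0 ≤ lamMulti j := by
  unfold lamMulti; positivity

lemma tsum_sq_mul_sq_le {ι : Type*} {r g : ι → ℝ} {C : ℝ} (hr : ∀ j, r j ∈ Set.Icc 0 C)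
    (hg : Summable fun j => g j ^ 2) :
    ∑' j, r j ^ 2 * g j ^ 2 ≤ C ^ 2 * ∑' j, g j ^ 2 := by
  have hterm : ∀ j, r j ^ 2 * g j ^ 2 ≤ C ^ 2 * g j ^ 2 := fun j =>
    mul_le_mul_of_nonneg_right (pow_le_pow_left₀ (hr j).1 (hr j).2 2) (sq_nonneg _)
  have hsum : Summable fun j => C ^ 2 * g j ^ 2 := hg.mul_left _
  calc ∑' j, r j ^ 2 * g j ^ 2
      ≤ ∑' j, C ^ 2 * g j ^ 2 :=
        (hsum.of_nonneg_of_le (fun j => by positivity) hterm).tsum_le_tsum hterm hsum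
    _ = C ^ 2 * ∑' j, g j ^ 2 := tsum_mul_left

lemma one_add_mul_div_one_add_mul_le {L σ τ : ℝ} (hL : 0 ≤ L) (hσ : 0 < σ) (hστ : σ ≤ τ) :
    (1 + L * τ) / (1 + L * σ) ≤ τ / σ := by
  rw [div_le_div_iff₀ (by positivity) hσ]
  nlinarith

def HasInvOneAddBounds (E : ℝ → ℝ) (M₁ M₂ : ℝ) : Prop :=
  ∀ z, 0 ≤ z → M₁ / (1 + z) ≤ E z ∧ E z ≤ M₂ / (1 + z)

namespace HasInvOneAddBounds

variable {E : ℝ → ℝ} {M₁ M₂ : ℝ}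

lemma pos (hE : HasInvOneAddBounds E M₁ M₂) (hM₁ : 0 < M₁) {z : ℝ} (hz : 0 ≤ z) : 0 < E z :=
  (div_pos hM₁ (by linarith)).trans_le (hE z hz).1

lemma le (hE : HasInvOneAddBounds E M₁ M₂) (hM₂ : 0 ≤ M₂) {z : ℝ} (hz : 0 ≤ z) : E z ≤ M₂ :=
  (hE z hz).2.trans (div_le_self hM₂ (by linarith))

variable {ϑ x y : ℝ}

lemma div_add_mem_Icc (hE : HasInvOneAddBounds E M₁ M₂) (hM₁ : 0 < M₁) (hM₂ : 0 ≤ M₂)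
    (hϑ : 0 < ϑ) (hx : 0 ≤ x) (hy : 0 ≤ y) :
    E x / (ϑ + E y) ∈ Set.Icc 0 (M₂ / ϑ) := by
  have hEy := hE.pos hM₁ hy
  exact ⟨div_nonneg (hE.pos hM₁ hx).le (by linarith),
    div_le_div₀ hM₂ (hE.le hM₂ hx) hϑ (by linarith)⟩

lemma mul_div_add_mem_Icc (hE : HasInvOneAddBounds E M₁ M₂) (hM₁ : 0 < M₁) (hM₂ : 0 ≤ M₂)
    (hϑ : 0 < ϑ) (hx : 0 ≤ x) {L σ τ : ℝ} (hL : 0 ≤ L) (hσ : 0 < σ) (hστ : σ ≤ τ) :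
    E x * E (L * σ) / (ϑ + E (L * τ)) ∈ Set.Icc 0 (M₂ ^ 2 * τ / (M₁ * σ)) := by
  have hLσ : 0 ≤ L * σ := mul_nonneg hL hσ.le
  have hLτ : 0 ≤ L * τ := mul_nonneg hL (hσ.le.trans hστ)
  have hEσ := hE.pos hM₁ hLσ
  have hden : M₁ / (1 + L * τ) ≤ ϑ + E (L * τ) := by linarith [(hE _ hLτ).1]
  refine ⟨div_nonneg (mul_nonneg (hE.pos hM₁ hx).le hEσ.le) (by linarith [hE.pos hM₁ hLτ]), ?_⟩
  calc E x * E (L * σ) / (ϑ + E (L * τ))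
      ≤ M₂ * (M₂ / (1 + L * σ)) / (M₁ / (1 + L * τ)) :=
        div_le_div₀ (by positivity) (mul_le_mul (hE.le hM₂ hx) (hE _ hLσ).2 hEσ.le hM₂)
          (by positivity) hden
    _ = M₂ ^ 2 / M₁ * ((1 + L * τ) / (1 + L * σ)) := by field_simp
    _ ≤ M₂ ^ 2 / M₁ * (τ / σ) :=
        mul_le_mul_of_nonneg_left (one_add_mul_div_one_add_mul_le hL hσ hστ) (by positivity)
    _ = M₂ ^ 2 * τ / (M₁ * σ) := by ring

end HasInvOneAddBounds

theorem stmt_16_general (d : ℕ) (α T M₁ M₂ ϑ : ℝ)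
    (hα0 : 0 < α) (hM₁ : 0 < M₁) (hM₂ : 0 < M₂) (hϑ : 0 < ϑ)
    (hML : ∀ z : ℝ, 0 ≤ z →
      M₁ / (1 + z) ≤ mittagLeffler α 1 (-z) ∧ mittagLeffler α 1 (-z) ≤ M₂ / (1 + z))
    (g : (Fin d → ℕ+) → ℝ) (hg : Summable fun j => (g j) ^ 2) :
    (∀ t ∈ Set.Icc (0 : ℝ) T,
      ∑' j : Fin d → ℕ+,
          (mittagLeffler α 1 (-(lamMulti j * t ^ α)) /
            (ϑ + mittagLeffler α 1 (-(lamMulti j * T ^ α)))) ^ 2 * (g j) ^ 2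
        ≤ (M₂ / ϑ) ^ 2 * ∑' j : Fin d → ℕ+, (g j) ^ 2) ∧
    (∀ t ∈ Set.Icc (0 : ℝ) T, ∀ s ∈ Set.Ioc (0 : ℝ) T,
      ∑' j : Fin d → ℕ+,
          (mittagLeffler α 1 (-(lamMulti j * t ^ α)) *
            mittagLeffler α 1 (-(lamMulti j * s ^ α)) /
            (ϑ + mittagLeffler α 1 (-(lamMulti j * T ^ α)))) ^ 2 * (g j) ^ 2
        ≤ (M₂ ^ 2 * T ^ α / (M₁ * s ^ α)) ^ 2 * ∑' j : Fin d → ℕ+, (g j) ^ 2) := by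
  have hE : HasInvOneAddBounds (fun z => mittagLeffler α 1 (-z)) M₁ M₂ := hML
  have hzt : ∀ t ∈ Set.Icc (0 : ℝ) T, ∀ j : Fin d → ℕ+, 0 ≤ lamMulti j * t ^ α :=
    fun t ht j => mul_nonneg (lamMulti_nonneg j) (Real.rpow_nonneg ht.1 α)
  refine ⟨fun t ht => tsum_sq_mul_sq_le (fun j => ?_) hg,
    fun t ht s hs => tsum_sq_mul_sq_le (fun j => ?_) hg⟩
  · exact hE.div_add_mem_Icc hM₁ hM₂.le hϑ (hzt t ht j)
      (hzt T ⟨ht.1.trans ht.2, le_rfl⟩ j)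
  · exact hE.mul_div_add_mem_Icc hM₁ hM₂.le hϑ (hzt t ht j) (lamMulti_nonneg j)
      (Real.rpow_pos_of_pos hs.1 α) (Real.rpow_le_rpow hs.1.le hs.2 hα0.le)

theorem stmt_16 (d : ℕ) (hd : 1 ≤ d) (α T M₁ M₂ ϑ : ℝ)
    (hα0 : 0 < α) (hα1 : α < 1) (hT : 0 < T) (hM₁ : 0 < M₁) (hM₂ : 0 < M₂) (hϑ : 0 < ϑ)
    (hML : ∀ z : ℝ, 0 ≤ z →
      M₁ / (1 + z) ≤ mittagLeffler α 1 (-z) ∧ mittagLeffler α 1 (-z) ≤ M₂ / (1 + z))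
    (g : (Fin d → ℕ+) → ℝ) (hg : Summable fun j => (g j) ^ 2) :
    (∀ t ∈ Set.Icc (0 : ℝ) T,
      ∑' j : Fin d → ℕ+,
          (mittagLeffler α 1 (-(lamMulti j * t ^ α)) /
            (ϑ + mittagLeffler α 1 (-(lamMulti j * T ^ α)))) ^ 2 * (g j) ^ 2
        ≤ (M₂ / ϑ) ^ 2 * ∑' j : Fin d → ℕ+, (g j) ^ 2) ∧
    (∀ t ∈ Set.Icc (0 : ℝ) T, ∀ s ∈ Set.Ioc (0 : ℝ) T,
      ∑' j : Fin d → ℕ+,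
          (mittagLeffler α 1 (-(lamMulti j * t ^ α)) *
            mittagLeffler α 1 (-(lamMulti j * s ^ α)) /
            (ϑ + mittagLeffler α 1 (-(lamMulti j * T ^ α)))) ^ 2 * (g j) ^ 2
        ≤ (M₂ ^ 2 * T ^ α / (M₁ * s ^ α)) ^ 2 * ∑' j : Fin d → ℕ+, (g j) ^ 2) :=
  stmt_16_general d α T M₁ M₂ ϑ hα0 hM₁ hM₂ hϑ hML g hg
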